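/- For real numbers a ≤ b and t > 0 with t < π/(2√b) when b > 0, one has C_a(t) ≥ C_b(t), where C_κ(t) = √κ·cot(√κ t) if κ > 0, C_κ(t) = 1/t if κ = 0, and C_κ(t) = √(−κ)·coth(√(−κ) t) if κ < 0. -/

import Mathlib

/-!
Multiplying by `t` removes the scale: `t · C_κ(t)` is `s cot s` with `s = √κ t` when `κ > 0`,
`1` when `κ = 0`, and `s coth s` with `s = √(−κ) t` when `κ < 0`. The function `s cot s`
decreases on `(0, π)` and stays below `1`, while `s coth s` increases on `(0, ∞)` and stays
above `1`, so `t · C_κ(t)` decreases in `κ`.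
-/

/-- The comparison function `C_b(t)`: `√b·cot(√b t)` if `b > 0`, `1/t` if `b = 0`,
`√(−b)·coth(√(−b) t)` if `b < 0`. -/
noncomputable def Cb (b t : ℝ) : ℝ :=
  if 0 < b then Real.sqrt b * (Real.cos (Real.sqrt b * t) / Real.sin (Real.sqrt b * t))
  else if b = 0 then 1 / t
  else Real.sqrt (-b) * (Real.cosh (Real.sqrt (-b) * t) / Real.sinh (Real.sqrt (-b) * t))

/-- The barrier function `φ_a` on `[0,r]`. -/
noncomputable def phi (a r t : ℝ) : ℝ :=
  if 0 < a then Real.cos (Real.sqrt a * t) - Real.cos (Real.sqrt a * r)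
  else if a = 0 then r ^ 2 - t ^ 2
  else Real.cosh (Real.sqrt (-a) * r) - Real.cosh (Real.sqrt (-a) * t)

open Real Set

lemma mul_cos_le_sin {s : ℝ} (hs₀ : 0 ≤ s) (hsπ : s ≤ π) : s * cos s ≤ sin s := by
  have hmvt := (convex_Icc 0 s).mul_sub_le_image_sub_of_le_deriv continuous_sin.continuousOn
    differentiable_sin.differentiableOn (C := cos s) (fun x hx => by
      rw [interior_Icc] at hx
      rw [Real.deriv_sin]
      exact cos_le_cos_of_nonneg_of_le_pi hx.1.le hsπ hx.2.le)
    0 (left_mem_Icc.2 hs₀) s (right_mem_Icc.2 hs₀) hs₀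
  simpa [mul_comm] using hmvt

lemma sinh_le_mul_cosh {s : ℝ} (hs : 0 ≤ s) : sinh s ≤ s * cosh s := by
  have hmvt := (convex_Icc 0 s).image_sub_le_mul_sub_of_deriv_le continuous_sinh.continuousOn
    differentiable_sinh.differentiableOn (C := cosh s) (fun x hx => by
      rw [interior_Icc] at hx
      rw [Real.deriv_sinh, cosh_le_cosh, abs_of_pos hx.1, abs_of_nonneg hs]
      exact hx.2.le)
    0 (left_mem_Icc.2 hs) s (right_mem_Icc.2 hs) hs
  simpa [mul_comm] using hmvt

lemma hasDerivAt_mul_cot {s : ℝ} (hs : sin s ≠ 0) :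
    HasDerivAt (fun s => s * (cos s / sin s)) ((sin s * cos s - s) / sin s ^ 2) s := by
  refine ((hasDerivAt_id' s).fun_mul
    ((hasDerivAt_cos s).fun_div (hasDerivAt_sin s) hs)).congr_deriv ?_
  field_simp
  linear_combination (-s) * sin_sq_add_cos_sq s

lemma hasDerivAt_mul_coth {s : ℝ} (hs : sinh s ≠ 0) :
    HasDerivAt (fun s => s * (cosh s / sinh s)) ((sinh s * cosh s - s) / sinh s ^ 2) s := by
  refine ((hasDerivAt_id' s).fun_mul
    ((hasDerivAt_cosh s).fun_div (hasDerivAt_sinh s) hs)).congr_deriv ?_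
  field_simp
  linear_combination (-s) * cosh_sq_sub_sinh_sq s

lemma antitoneOn_mul_cot : AntitoneOn (fun s => s * (cos s / sin s)) (Ioo 0 π) := by
  have hsin : ∀ s ∈ Ioo 0 π, sin s ≠ 0 := fun s hs => (sin_pos_of_mem_Ioo hs).ne'
  refine antitoneOn_of_hasDerivWithinAt_nonpos (convex_Ioo 0 π)
    (fun s hs => (hasDerivAt_mul_cot (hsin s hs)).continuousAt.continuousWithinAt)
    (fun s hs => (hasDerivAt_mul_cot (hsin s (interior_subset hs))).hasDerivWithinAt)
    fun s hs => ?_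
  rw [interior_Ioo] at hs
  have h2s : sin (2 * s) ≤ 2 * s := sin_le (by linarith [hs.1])
  rw [sin_two_mul] at h2s
  exact div_nonpos_of_nonpos_of_nonneg (by linarith) (sq_nonneg _)

lemma monotoneOn_mul_coth : MonotoneOn (fun s => s * (cosh s / sinh s)) (Ioi 0) := by
  have hsinh : ∀ s ∈ Ioi (0 : ℝ), sinh s ≠ 0 := fun s hs => (sinh_pos_iff.2 hs).ne'
  refine monotoneOn_of_hasDerivWithinAt_nonneg (convex_Ioi 0)
    (fun s hs => (hasDerivAt_mul_coth (hsinh s hs)).continuousAt.continuousWithinAt)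
    (fun s hs => (hasDerivAt_mul_coth (hsinh s (interior_subset hs))).hasDerivWithinAt)
    fun s hs => ?_
  rw [interior_Ioi] at hs
  have h2s : 2 * s ≤ sinh (2 * s) := self_le_sinh_iff.2 (by linarith [mem_Ioi.1 hs])
  rw [sinh_two_mul] at h2s
  exact div_nonneg (by linarith) (sq_nonneg _)

lemma mul_cot_le_one {s : ℝ} (hs₀ : 0 < s) (hsπ : s < π) : s * (cos s / sin s) ≤ 1 := by
  rw [mul_div_assoc', div_le_one (sin_pos_of_pos_of_lt_pi hs₀ hsπ)]
  exact mul_cos_le_sin hs₀.le hsπ.le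

lemma one_le_mul_coth {s : ℝ} (hs : 0 < s) : 1 ≤ s * (cosh s / sinh s) := by
  rw [mul_div_assoc', one_le_div (sinh_pos_iff.2 hs)]
  exact sinh_le_mul_cosh hs.le

lemma mul_Cb_of_pos {κ : ℝ} (hκ : 0 < κ) (t : ℝ) :
    t * Cb κ t = √κ * t * (cos (√κ * t) / sin (√κ * t)) := by
  rw [Cb, if_pos hκ]
  ring

lemma mul_Cb_of_neg {κ : ℝ} (hκ : κ < 0) (t : ℝ) :
    t * Cb κ t = √(-κ) * t * (cosh (√(-κ) * t) / sinh (√(-κ) * t)) := by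
  rw [Cb, if_neg hκ.not_gt, if_neg hκ.ne]
  ring

lemma mul_Cb_zero {t : ℝ} (ht : t ≠ 0) : t * Cb 0 t = 1 := by
  rw [Cb, if_neg (lt_irrefl 0), if_pos rfl, mul_one_div_cancel ht]

lemma mul_Cb_le_one {κ t : ℝ} (hκ : 0 < κ) (ht : 0 < t) (hπ : √κ * t < π) :
    t * Cb κ t ≤ 1 := by
  rw [mul_Cb_of_pos hκ]
  exact mul_cot_le_one (by positivity) hπ

lemma one_le_mul_Cb {κ t : ℝ} (hκ : κ ≤ 0) (ht : 0 < t) : 1 ≤ t * Cb κ t := by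
  rcases hκ.lt_or_eq with hκ | rfl
  · rw [mul_Cb_of_neg hκ]
    exact one_le_mul_coth (mul_pos (sqrt_pos.2 (neg_pos.2 hκ)) ht)
  · exact (mul_Cb_zero ht.ne').ge

lemma mul_Cb_antitone_of_pos {a b t : ℝ} (ha : 0 < a) (hab : a ≤ b) (ht : 0 < t)
    (hπ : √b * t < π) : t * Cb b t ≤ t * Cb a t := by
  have hle : √a * t ≤ √b * t := by gcongr
  have hpos : 0 < √a * t := by positivity
  rw [mul_Cb_of_pos ha, mul_Cb_of_pos (ha.trans_le hab)]
  exact antitoneOn_mul_cot ⟨hpos, hle.trans_lt hπ⟩ ⟨hpos.trans_le hle, hπ⟩ hle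

lemma mul_Cb_antitone_of_nonpos {a b t : ℝ} (hab : a ≤ b) (hb : b ≤ 0) (ht : 0 < t) :
    t * Cb b t ≤ t * Cb a t := by
  rcases hb.lt_or_eq with hb | rfl
  · have hle : √(-b) * t ≤ √(-a) * t := by gcongr
    have hpos : 0 < √(-b) * t := mul_pos (sqrt_pos.2 (neg_pos.2 hb)) ht
    rw [mul_Cb_of_neg hb, mul_Cb_of_neg (hab.trans_lt hb)]
    exact monotoneOn_mul_coth hpos (hpos.trans_le hle) hle
  · rw [mul_Cb_zero ht.ne']
    exact one_le_mul_Cb hab ht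

/-- for `a ≤ b` and `t > 0` (with `t < π/(2√b)` when `b > 0`),
one has `C_a(t) ≥ C_b(t)`. -/
theorem Cb_monotone_in_curvature (a b t : ℝ) (hab : a ≤ b) (ht : 0 < t)
    (hb : 0 < b → t < Real.pi / (2 * Real.sqrt b)) :
    Cb a t ≥ Cb b t := by
  suffices t * Cb b t ≤ t * Cb a t from le_of_mul_le_mul_left this ht
  by_cases hb₀ : 0 < b
  · have hπ : √b * t < π := by
      have := (lt_div_iff₀ (by positivity)).1 (hb hb₀)
      nlinarith [pi_pos]
    by_cases ha₀ : 0 < a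
    · exact mul_Cb_antitone_of_pos ha₀ hab ht hπ
    · exact (mul_Cb_le_one hb₀ ht hπ).trans (one_le_mul_Cb (not_lt.1 ha₀) ht)
  · exact mul_Cb_antitone_of_nonpos hab (not_lt.1 hb₀) ht
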